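/- For every m ≥ 0 and r ≥ 0, a_{m+r+1,r} = Σ_{x=0}^{2m} C(r, x) · c_{m,x}, where C(r, x) = 0 for x > r. -/

import Mathlib

/-!
A strict diagram `F ⊆ ℕ^r` with `m + r + 1` elements contains `μ_r`, so its skew part
`F \ μ_r` has `m` elements. Restricting `F` to the set `S` of coordinates used by the skew part
gives a diagram in `ℕ^|S|` counted by `c_{m,|S|}`; conversely `F` is recovered by extending by
zero and adding back `μ_r`. Summing over `S` gives `∑ₓ C(r, x) c_{m,x}`. The terms with
`x > 2m` vanish: every used coordinate is used by a skew element of weight two, and there are at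
most `m` of those, each using at most two coordinates.
-/

/-- A Ferrers diagram in `ℕ^k`: a finite nonempty downward-closed subset of `Fin k → ℕ`. -/
def IsFerrers {k : ℕ} (F : Finset (Fin k → ℕ)) : Prop :=
  F.Nonempty ∧ ∀ a ∈ F, ∀ x : Fin k → ℕ, (∀ i, x i ≤ a i) → x ∈ F

/-- A Ferrers diagram is strict if every coordinate is used by some element. -/
def IsStrict {k : ℕ} (F : Finset (Fin k → ℕ)) : Prop :=
  ∀ i : Fin k, ∃ a ∈ F, a i ≠ 0

/-- `numPart d n` = `p_d(n)`, the number of Ferrers diagrams in `ℕ^(d+1)` with `n` elements. -/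
noncomputable def numPart (d n : ℕ) : ℕ :=
  Nat.card {F : Finset (Fin (d + 1) → ℕ) // IsFerrers F ∧ F.card = n}

/-- `Amat n r` = `a_{n,r}`, the number of strict Ferrers diagrams in `ℕ^r` with `n` elements. -/
noncomputable def Amat (n r : ℕ) : ℕ :=
  Nat.card {F : Finset (Fin r → ℕ) // IsFerrers F ∧ IsStrict F ∧ F.card = n}

/-- `mu r` = `μ_r = {0, e_1, …, e_r} ⊆ ℕ^r`. -/
def mu (r : ℕ) : Finset (Fin r → ℕ) :=
  insert 0 (Finset.univ.image fun i => Pi.single i 1)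

/-- The reduced dimension of a Ferrers diagram `F ⊆ ℕ^x` (containing `μ_x`): the number of
coordinates used by some element of `F \ μ_x`. -/
noncomputable def rdim {x : ℕ} (F : Finset (Fin x → ℕ)) : ℕ :=
  Nat.card {i : Fin x // ∃ a ∈ F \ mu x, a i ≠ 0}

/-- Two coordinates are touched by a common element of the skew diagram `σ`. -/
def Touches {x : ℕ} (σ : Finset (Fin x → ℕ)) (i j : Fin x) : Prop :=
  ∃ a ∈ σ, a i ≠ 0 ∧ a j ≠ 0

/-- `B` is a block of the finest partition of `Fin x` compatible with `σ`,
i.e. an equivalence class of the equivalence relation generated by `Touches σ`. -/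
def IsBlock {x : ℕ} (σ : Finset (Fin x → ℕ)) (B : Set (Fin x)) : Prop :=
  ∃ i : Fin x, B = {j | Relation.EqvGen (Touches σ) i j}

/-- The support of `a` is contained in `B`. -/
def SuppIn {x : ℕ} (a : Fin x → ℕ) (B : Set (Fin x)) : Prop :=
  ∀ i, a i ≠ 0 → i ∈ B

/-- The component of `σ` with block `B` is of type `σ₂`: `B = {i, j}` with `i ≠ j`, and the
elements of `σ` supported in `B` are exactly `{e_i + e_j}`. -/
def IsSigma2 {x : ℕ} (σ : Finset (Fin x → ℕ)) (B : Set (Fin x)) : Prop :=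
  ∃ i j : Fin x, i ≠ j ∧ B = {i, j} ∧
    {a ∈ (σ : Set (Fin x → ℕ)) | SuppIn a B} = {Pi.single i 1 + Pi.single j 1}

/-- `Cmat m x` = `c_{m,x}`. -/
noncomputable def Cmat (m x : ℕ) : ℕ :=
  Nat.card {F : Finset (Fin x → ℕ) //
    IsFerrers F ∧ mu x ⊆ F ∧ F.card = m + x + 1 ∧ rdim F = x}

/-- `Dmat m x` = `d_{m,x}`. -/
noncomputable def Dmat (m x : ℕ) : ℕ :=
  Nat.card {F : Finset (Fin x → ℕ) //
    IsFerrers F ∧ mu x ⊆ F ∧ F.card = m + x + 1 ∧ rdim F = x ∧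
      ∀ B : Set (Fin x), IsBlock (F \ mu x) B → ¬ IsSigma2 (F \ mu x) B}

/-- A point of type 1: `e_i + e_j` for some `i ≠ j`. -/
def IsType1 {r : ℕ} (a : Fin r → ℕ) : Prop :=
  ∃ i j : Fin r, i ≠ j ∧ a = Pi.single i 1 + Pi.single j 1

/-- A point of type 2: `2·e_i` for some `i`. -/
def IsType2 {r : ℕ} (a : Fin r → ℕ) : Prop :=
  ∃ i : Fin r, a = Pi.single i 2

/-- `Fmat n r` = `f_{n,r}`. -/
noncomputable def Fmat (n r : ℕ) : ℕ :=
  Nat.card {F : Finset (Fin r → ℕ) //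
    IsFerrers F ∧ mu r ⊆ F ∧ F.card = n ∧
      ∀ B : Set (Fin r), IsBlock (F \ mu r) B →
        ∃ a ∈ F \ mu r, SuppIn a B ∧ ¬ IsType1 a}

open Finset

section ExtendByZero

variable {κ ι : Type*} {e : κ ↪ ι}

variable (e) in
noncomputable def extendByZero (b : κ → ℕ) : ι → ℕ := Function.extend e b (0 : ι → ℕ)

@[simp] lemma extendByZero_apply_self (b : κ → ℕ) (j : κ) : extendByZero e b (e j) = b j :=
  e.injective.extend_apply b (0 : ι → ℕ) j

lemma extendByZero_apply_of_notMem_range (b : κ → ℕ) {i : ι} (hi : i ∉ Set.range e) :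
    extendByZero e b i = 0 :=
  Function.extend_apply' b (0 : ι → ℕ) i hi

@[simp] lemma extendByZero_zero : extendByZero e 0 = 0 :=
  Function.extend_zero e

lemma extendByZero_mono : Monotone (extendByZero e) := fun b c h i => by
  by_cases hi : i ∈ Set.range e
  · obtain ⟨j, rfl⟩ := hi
    simpa using h j
  · simp [extendByZero_apply_of_notMem_range _ hi]

lemma extendByZero_injective : Function.Injective (extendByZero e) :=
  Function.extend_injective e.injective (0 : ι → ℕ)

lemma mem_range_of_extendByZero_ne_zero {b : κ → ℕ} {i : ι} (h : extendByZero e b i ≠ 0) :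
    i ∈ Set.range e := by
  by_contra hi
  exact h (extendByZero_apply_of_notMem_range b hi)

lemma extendByZero_comp {a : ι → ℕ} (ha : ∀ i, a i ≠ 0 → i ∈ Set.range e) :
    extendByZero e (a ∘ e) = a := by
  funext i
  by_cases hi : i ∈ Set.range e
  · obtain ⟨j, rfl⟩ := hi
    simp
  · rw [extendByZero_apply_of_notMem_range _ hi]
    by_contra h
    exact hi (ha i (Ne.symm h))

lemma extendByZero_comp_of_le {y : ι → ℕ} {b : κ → ℕ} (h : y ≤ extendByZero e b) :
    extendByZero e (y ∘ e) = y :=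
  extendByZero_comp fun i hi => mem_range_of_extendByZero_ne_zero (b := b) (by grind [h i])

lemma sum_extendByZero [Fintype κ] [Fintype ι] (b : κ → ℕ) :
    ∑ i, extendByZero e b i = ∑ j, b j := by
  classical
  rw [← sum_subset (subset_univ (univ.map e)), sum_map]
  · simp
  · intro i _ hi
    exact extendByZero_apply_of_notMem_range b (by simpa using hi)

end ExtendByZero

section WeightTwo

variable {ι : Type*}

lemma single_one_le_iff_ne_zero [DecidableEq ι] {a : ι → ℕ} {i : ι} :
    Pi.single i 1 ≤ a ↔ a i ≠ 0 := by
  constructor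
  · intro h
    have := h i
    simp only [Pi.single_eq_same] at this
    omega
  · intro h j
    rcases eq_or_ne j i with rfl | hj
    · simp only [Pi.single_eq_same]
      omega
    · simp [hj]

/-- Take `b = e_i + e_j` for any unit vector `e_j` below `a - e_i`. -/
lemma exists_le_sum_eq_two [Fintype ι] [DecidableEq ι] {a : ι → ℕ} {i : ι} (hi : a i ≠ 0)
    (h : 2 ≤ ∑ j, a j) : ∃ b ≤ a, b i ≠ 0 ∧ ∑ j, b j = 2 := by
  set a' := a - Pi.single i 1
  have ha : a = a' + Pi.single i 1 :=
    (tsub_add_cancel_of_le (single_one_le_iff_ne_zero.2 hi)).symm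
  have ha' : a' ≠ 0 := by
    rintro h0
    rw [h0, zero_add] at ha
    simp [ha] at h
  obtain ⟨j, hj⟩ := Function.ne_iff.1 ha'
  refine ⟨Pi.single j 1 + Pi.single i 1, ?_, by simp, ?_⟩
  · rw [ha]
    exact add_le_add_left (single_one_le_iff_ne_zero.2 hj) _
  · simp [sum_add_distrib]

lemma card_filter_ne_zero_le_sum [Fintype ι] (b : ι → ℕ) : #{i | b i ≠ 0} ≤ ∑ i, b i :=
  calc #{i | b i ≠ 0} = ∑ _ ∈ {i | b i ≠ 0}, 1 := card_eq_sum_ones _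
    _ ≤ ∑ i ∈ {i | b i ≠ 0}, b i :=
      sum_le_sum fun _ hi => Nat.one_le_iff_ne_zero.2 (mem_filter.1 hi).2
    _ ≤ ∑ i, b i := sum_le_sum_of_subset (subset_univ _)

end WeightTwo

section Mu

variable {r : ℕ} {F : Finset (Fin r → ℕ)}

lemma mem_mu_iff_sum_le_one {a : Fin r → ℕ} : a ∈ mu r ↔ ∑ i, a i ≤ 1 := by
  constructor
  · simp only [mu, mem_insert, mem_image, mem_univ, true_and]
    rintro (rfl | ⟨i, rfl⟩) <;> simp
  · intro h
    by_cases ha : a = 0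
    · simp [mu, ha]
    obtain ⟨i, hi⟩ := Function.ne_iff.1 ha
    rw [Pi.zero_apply] at hi
    have hai : a i ≤ 1 := (single_le_sum (fun _ _ => Nat.zero_le _) (mem_univ i)).trans h
    have hsingle : a = Pi.single i 1 := by
      funext j
      rcases eq_or_ne j i with rfl | hj
      · rw [Pi.single_eq_same]
        omega
      · have := add_le_sum (f := a) (fun _ _ => Nat.zero_le _) (mem_univ i) (mem_univ j) hj.symm
        rw [Pi.single_eq_of_ne hj]
        omega
    simp [mu, hsingle]

lemma card_mu (r : ℕ) : #(mu r) = r + 1 := by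
  have hinj : Function.Injective fun i : Fin r => (Pi.single i 1 : Fin r → ℕ) := fun i j h => by
    simpa [Pi.single_apply] using congrFun h i
  rw [mu, card_insert_of_notMem, card_image_of_injective _ hinj, card_univ, Fintype.card_fin]
  simp [eq_comm]

lemma card_eq_card_sdiff_mu_add (h : mu r ⊆ F) : #F = #(F \ mu r) + (r + 1) := by
  rw [← card_mu, card_sdiff_add_card_eq_card h]

end Mu

section Ferrers

variable {r : ℕ} {F : Finset (Fin r → ℕ)}

lemma IsFerrers.zero_mem (hF : IsFerrers F) : 0 ∈ F := by
  obtain ⟨a, ha⟩ := hF.1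
  exact hF.2 a ha 0 fun i => Nat.zero_le _

lemma isFerrers_mu (r : ℕ) : IsFerrers (mu r) :=
  ⟨⟨0, by simp [mu]⟩, fun a ha x hx => mem_mu_iff_sum_le_one.2
    ((sum_le_sum fun i _ => hx i).trans (mem_mu_iff_sum_le_one.1 ha))⟩

lemma IsFerrers.union {G : Finset (Fin r → ℕ)} (hF : IsFerrers F) (hG : IsFerrers G) :
    IsFerrers (F ∪ G) := by
  refine ⟨hF.1.mono subset_union_left, fun a ha x hx => ?_⟩
  rcases mem_union.1 ha with ha | ha
  · exact mem_union_left _ (hF.2 a ha x hx)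
  · exact mem_union_right _ (hG.2 a ha x hx)

lemma IsFerrers.isStrict_iff (hF : IsFerrers F) : IsStrict F ↔ mu r ⊆ F := by
  constructor
  · intro hS b hb
    simp only [mu, mem_insert, mem_image, mem_univ, true_and] at hb
    obtain rfl | ⟨i, rfl⟩ := hb
    · exact hF.zero_mem
    · obtain ⟨a, ha, hai⟩ := hS i
      exact hF.2 a ha _ (single_one_le_iff_ne_zero.2 hai)
  · intro h i
    exact ⟨Pi.single i 1, h (by simp [mu]), by simp⟩

lemma IsFerrers.apply_lt_card (hF : IsFerrers F) {a : Fin r → ℕ} (ha : a ∈ F) (i : Fin r) :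
    a i < #F := by
  have hline : (range (a i + 1)).image (fun t => (Pi.single i t : Fin r → ℕ)) ⊆ F := by
    intro b hb
    obtain ⟨t, ht, rfl⟩ := mem_image.1 hb
    refine hF.2 a ha _ fun j => ?_
    rcases eq_or_ne j i with rfl | hj
    · simpa [Nat.lt_succ_iff] using ht
    · simp [hj]
  have := card_le_card hline
  rw [card_image_of_injective _ (Pi.single_injective i), card_range] at this
  omega

lemma finite_setOf_isFerrers_card (r n : ℕ) :
    {F : Finset (Fin r → ℕ) | IsFerrers F ∧ #F = n}.Finite := by
  refine ((Fintype.piFinset fun _ : Fin r => range n).powerset).finite_toSet.subset ?_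
  rintro F ⟨hF, rfl⟩
  simp only [coe_powerset, Set.mem_preimage, Set.mem_powerset_iff]
  intro a ha
  simpa using fun i => hF.apply_lt_card ha i

end Ferrers

section SkewSupport

variable {r : ℕ} {F : Finset (Fin r → ℕ)}

def skewSupport (F : Finset (Fin r → ℕ)) : Finset (Fin r) :=
  {i | ∃ a ∈ F \ mu r, a i ≠ 0}

lemma mem_skewSupport {i : Fin r} : i ∈ skewSupport F ↔ ∃ a ∈ F \ mu r, a i ≠ 0 := by
  simp [skewSupport]

lemma rdim_eq_card_skewSupport : rdim F = #(skewSupport F) := by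
  rw [rdim, Nat.card_eq_fintype_card, Fintype.card_subtype]
  rfl

lemma rdim_eq_iff : rdim F = r ↔ skewSupport F = univ := by
  rw [rdim_eq_card_skewSupport, ← card_eq_iff_eq_univ, Fintype.card_fin]

/-- Every used coordinate is used by an element of weight two, and each of those uses at most
two coordinates. -/
lemma IsFerrers.rdim_le (hF : IsFerrers F) : rdim F ≤ 2 * #(F \ mu r) := by
  set T := (F \ mu r).filter fun b => ∑ j, b j = 2
  have hcover : skewSupport F ⊆ T.biUnion fun b => {i | b i ≠ 0} := by
    intro i hi
    obtain ⟨a, ha, hai⟩ := mem_skewSupport.1 hi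
    obtain ⟨haF, hamu⟩ := mem_sdiff.1 ha
    rw [mem_mu_iff_sum_le_one, not_le] at hamu
    obtain ⟨b, hba, hbi, hb⟩ := exists_le_sum_eq_two hai hamu
    have hbF : b ∈ F \ mu r :=
      mem_sdiff.2 ⟨hF.2 a haF b hba, by rw [mem_mu_iff_sum_le_one]; omega⟩
    exact mem_biUnion.2 ⟨b, mem_filter.2 ⟨hbF, hb⟩, by simpa using hbi⟩
  calc rdim F = #(skewSupport F) := rdim_eq_card_skewSupport
    _ ≤ #(T.biUnion fun b => {i | b i ≠ 0}) := card_le_card hcover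
    _ ≤ ∑ b ∈ T, #{i | b i ≠ 0} := card_biUnion_le
    _ ≤ ∑ _b ∈ T, 2 :=
      sum_le_sum fun b hb => (mem_filter.1 hb).2 ▸ card_filter_ne_zero_le_sum b
    _ = 2 * #T := by rw [sum_const, smul_eq_mul, mul_comm]
    _ ≤ 2 * #(F \ mu r) := Nat.mul_le_mul_left 2 (card_filter_le _ _)

lemma cmat_eq_zero_of_two_mul_lt {m x : ℕ} (h : 2 * m < x) : Cmat m x = 0 := by
  rw [Cmat, Nat.card_eq_zero]
  refine Or.inl ⟨fun ⟨F, hF, hmu, hc, hr⟩ => ?_⟩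
  have := hF.rdim_le
  rw [card_eq_card_sdiff_mu_add hmu] at hc
  omega

end SkewSupport

section Restriction

variable {k r : ℕ} (e : Fin k ↪ Fin r)

noncomputable def restrictDiagram (F : Finset (Fin r → ℕ)) : Finset (Fin k → ℕ) :=
  F.preimage (extendByZero e) extendByZero_injective.injOn

/-- Extending by zero loses the unit vectors `e_i` for `i ∉ range e`; adding all of `μ_r` puts
them back. -/
noncomputable def extendDiagram (F' : Finset (Fin k → ℕ)) : Finset (Fin r → ℕ) :=
  F'.image (extendByZero e) ∪ mu r

variable {e} {F : Finset (Fin r → ℕ)} {F' : Finset (Fin k → ℕ)}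

lemma mem_restrictDiagram {b : Fin k → ℕ} :
    b ∈ restrictDiagram e F ↔ extendByZero e b ∈ F :=
  mem_preimage

lemma extendByZero_mem_mu_iff {b : Fin k → ℕ} : extendByZero e b ∈ mu r ↔ b ∈ mu k := by
  simp only [mem_mu_iff_sum_le_one, sum_extendByZero]

lemma IsFerrers.restrictDiagram (hF : IsFerrers F) : IsFerrers (restrictDiagram e F) := by
  refine ⟨⟨0, mem_restrictDiagram.2 ?_⟩, fun b hb y hy => mem_restrictDiagram.2 ?_⟩
  · simpa using hF.zero_mem
  · exact hF.2 _ (mem_restrictDiagram.1 hb) _ (extendByZero_mono hy)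

lemma IsFerrers.extendDiagram (hF' : IsFerrers F') : IsFerrers (extendDiagram e F') := by
  refine IsFerrers.union ⟨hF'.1.image _, fun a ha y hy => ?_⟩ (isFerrers_mu r)
  obtain ⟨b, hb, rfl⟩ := mem_image.1 ha
  refine mem_image.2 ⟨y ∘ e, hF'.2 b hb _ fun j => by simpa using hy (e j), ?_⟩
  exact extendByZero_comp_of_le hy

lemma extendDiagram_sdiff_mu :
    extendDiagram e F' \ mu r = (F' \ mu k).image (extendByZero e) := by
  ext a
  simp only [extendDiagram, mem_sdiff, mem_union, mem_image]
  constructor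
  · rintro ⟨⟨b, hb, rfl⟩ | ha, hna⟩
    · exact ⟨b, ⟨hb, by rwa [extendByZero_mem_mu_iff] at hna⟩, rfl⟩
    · exact absurd ha hna
  · rintro ⟨b, ⟨hb, hnb⟩, rfl⟩
    exact ⟨Or.inl ⟨b, hb, rfl⟩, by rwa [extendByZero_mem_mu_iff]⟩

lemma skewSupport_extendDiagram : skewSupport (extendDiagram e F') = (skewSupport F').map e := by
  ext i
  simp only [mem_skewSupport, extendDiagram_sdiff_mu, mem_image, mem_map]
  constructor
  · rintro ⟨_, ⟨b, hb, rfl⟩, hbi⟩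
    obtain ⟨j, rfl⟩ := mem_range_of_extendByZero_ne_zero hbi
    exact ⟨j, ⟨b, hb, by simpa using hbi⟩, rfl⟩
  · rintro ⟨j, ⟨b, hb, hbj⟩, rfl⟩
    exact ⟨_, ⟨b, hb, rfl⟩, by simpa using hbj⟩

lemma restrictDiagram_extendDiagram (hmu : mu k ⊆ F') :
    restrictDiagram e (extendDiagram e F') = F' := by
  ext b
  simp only [mem_restrictDiagram, extendDiagram, mem_union, mem_image,
    extendByZero_injective.eq_iff, exists_eq_right, extendByZero_mem_mu_iff]
  exact ⟨fun h => h.elim id (hmu ·), Or.inl⟩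

lemma extendDiagram_restrictDiagram (hmu : mu r ⊆ F) (hsupp : skewSupport F ⊆ univ.map e) :
    extendDiagram e (restrictDiagram e F) = F := by
  ext a
  simp only [extendDiagram, mem_union, mem_image, mem_restrictDiagram]
  constructor
  · rintro (⟨b, hb, rfl⟩ | ha)
    · exact hb
    · exact hmu ha
  · intro ha
    by_cases ham : a ∈ mu r
    · exact Or.inr ham
    have hrange : ∀ i, a i ≠ 0 → i ∈ Set.range e := fun i hi => by
      simpa using hsupp (mem_skewSupport.2 ⟨a, mem_sdiff.2 ⟨ha, ham⟩, hi⟩)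
    exact Or.inl ⟨a ∘ e, by rwa [extendByZero_comp hrange], extendByZero_comp hrange⟩

end Restriction

section Counting

variable {k r : ℕ} {e : Fin k ↪ Fin r} {m : ℕ}
  {F : Finset (Fin r → ℕ)} {F' : Finset (Fin k → ℕ)}

lemma restrictDiagram_spec (hF : IsFerrers F) (hS : IsStrict F) (hc : #F = m + r + 1)
    (hsupp : skewSupport F = univ.map e) :
    IsFerrers (restrictDiagram e F) ∧ mu k ⊆ restrictDiagram e F ∧
      #(restrictDiagram e F) = m + k + 1 ∧ rdim (restrictDiagram e F) = k := by
  have hmu : mu r ⊆ F := hF.isStrict_iff.1 hS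
  have hext : extendDiagram e (restrictDiagram e F) = F :=
    extendDiagram_restrictDiagram hmu hsupp.subset
  have hmu' : mu k ⊆ restrictDiagram e F := fun b hb =>
    mem_restrictDiagram.2 (hmu (extendByZero_mem_mu_iff.2 hb))
  refine ⟨hF.restrictDiagram, hmu', ?_, ?_⟩
  · have hskew : #(restrictDiagram e F \ mu k) = #(F \ mu r) := by
      rw [← card_image_of_injective _ (extendByZero_injective (e := e)),
        ← extendDiagram_sdiff_mu, hext]
    rw [card_eq_card_sdiff_mu_add hmu] at hc
    rw [card_eq_card_sdiff_mu_add hmu', hskew]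
    omega
  · rw [rdim_eq_iff]
    apply map_injective e
    rw [← skewSupport_extendDiagram, hext, hsupp]

lemma extendDiagram_spec (hF' : IsFerrers F') (hmu : mu k ⊆ F') (hc : #F' = m + k + 1)
    (hr : rdim F' = k) :
    (IsFerrers (extendDiagram e F') ∧ IsStrict (extendDiagram e F') ∧
      #(extendDiagram e F') = m + r + 1) ∧ skewSupport (extendDiagram e F') = univ.map e := by
  have hF : IsFerrers (extendDiagram e F') := hF'.extendDiagram
  have hmu' : mu r ⊆ extendDiagram e F' := subset_union_right
  refine ⟨⟨hF, hF.isStrict_iff.2 hmu', ?_⟩, ?_⟩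
  · rw [card_eq_card_sdiff_mu_add hmu] at hc
    rw [card_eq_card_sdiff_mu_add hmu', extendDiagram_sdiff_mu,
      card_image_of_injective _ extendByZero_injective]
    omega
  · rw [skewSupport_extendDiagram, rdim_eq_iff.1 hr]

variable (e m) in
lemma natCard_strict_skewSupport_eq_cmat :
    Nat.card {F : Finset (Fin r → ℕ) //
        (IsFerrers F ∧ IsStrict F ∧ #F = m + r + 1) ∧ skewSupport F = univ.map e} =
      Cmat m k := by
  refine Nat.card_congr
    { toFun := fun F =>
        ⟨restrictDiagram e F, restrictDiagram_spec F.2.1.1 F.2.1.2.1 F.2.1.2.2 F.2.2⟩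
      invFun := fun F' =>
        ⟨extendDiagram e F', extendDiagram_spec F'.2.1 F'.2.2.1 F'.2.2.2.1 F'.2.2.2.2⟩
      left_inv := ?_
      right_inv := ?_ }
  · rintro ⟨F, ⟨hF, hS, -⟩, hsupp⟩
    exact Subtype.ext (extendDiagram_restrictDiagram (hF.isStrict_iff.1 hS) hsupp.subset)
  · rintro ⟨F', -, hmu, -⟩
    exact Subtype.ext (restrictDiagram_extendDiagram hmu)

lemma amat_eq_sum_cmat_card (m r : ℕ) :
    Amat (m + r + 1) r = ∑ S : Finset (Fin r), Cmat m #S := by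
  let P : Finset (Fin r → ℕ) → Prop := fun F => IsFerrers F ∧ IsStrict F ∧ #F = m + r + 1
  have : Finite {F // P F} :=
    ((finite_setOf_isFerrers_card r (m + r + 1)).subset fun F hF => ⟨hF.1, hF.2.2⟩).to_subtype
  rw [Amat, ← Nat.card_congr (Equiv.sigmaFiberEquiv fun F : {F // P F} => skewSupport F.1),
    Nat.card_sigma]
  refine sum_congr rfl fun S _ => ?_
  rw [← natCard_strict_skewSupport_eq_cmat (S.orderEmbOfFin rfl).toEmbedding,
    map_orderEmbOfFin_univ]
  exact Nat.card_congr (Equiv.subtypeSubtypeEquivSubtypeInter P (skewSupport · = S))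

end Counting

/-- `a_{m+r+1,r} = Σ_{x=0}^{2m} C(r, x) · c_{m,x}` for all `m, r ≥ 0`. -/
theorem statement4 (m r : ℕ) :
    Amat (m + r + 1) r = ∑ x ∈ Finset.range (2 * m + 1), Nat.choose r x * Cmat m x := by
  have hsum : Amat (m + r + 1) r = ∑ x ∈ range (r + 1), r.choose x * Cmat m x := by
    rw [amat_eq_sum_cmat_card, ← powerset_univ, sum_powerset_apply_card, card_univ,
      Fintype.card_fin]
    simp only [smul_eq_mul]
  -- both sides are the finite sum of all terms, which vanish for `x > r` and for `x > 2m`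
  rw [hsum, ← finsum_eq_sum_of_support_subset _ ?_, finsum_eq_sum_of_support_subset _ ?_]
  all_goals
    intro x hx
    by_contra hlt
    simp only [coe_range, Set.mem_Iio, not_lt] at hlt
    apply hx
    dsimp only
  · rw [cmat_eq_zero_of_two_mul_lt (by omega), mul_zero]
  · rw [Nat.choose_eq_zero_of_lt (by omega), zero_mul]
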